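/- Let (Ω, 𝒜, ℙ) be a probability space, m ≥ 1, X = (X_1,…,X_m) an m-tuple of stochastic processes with right-continuous paths having left limits, ρ a map from delayed and stopped versions of X to real random variables, 𝒯 a set of delays containing a refining sequence (τ^n)_{n∈ℕ} of phased delays increasing to identity, and 𝒳 = {X⋄τ : τ ∈ 𝒯} ∪ {X}. Let Π and Π̃ be two increasing sequences of unbounded partitions of [0,∞) with mesh tending to 0, and let σ be a permutation of {1,…,m}. Suppose the ISU decomposition scheme δ^{ISU} with respect to Π (with natural update order) and the ISU decomposition scheme δ̃^{ISU} with respect to Π̃ with update order σ both exist on 𝒳 (with values that are right-continuous with left limits and start at 0) and are both stable at X along (τ^n). Then almost surely δ^{ISU}_i(X)(t) = δ̃^{ISU}_i(X)(t) for all i and all t ≥ 0. -/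

import Mathlib

open Filter Topology Set MeasureTheory

/-- A path is càdlàg on `[0,∞)`: right-continuous at every `t ≥ 0` and with left limits at
every `t > 0`. -/
def CadlagOn (f : ℝ → ℝ) : Prop :=
  (∀ t, 0 ≤ t → ContinuousWithinAt f (Ici t) t) ∧
  (∀ t, 0 < t → ∃ L, Tendsto f (𝓝[<] t) (𝓝 L))

/-- A delay: each component is `[0,∞)`-valued, nondecreasing, right-continuous and bounded
above by the identity on `[0,∞)`. -/
def IsDelay {m : ℕ} (τ : Fin m → ℝ → ℝ) : Prop :=
  ∀ i, (∀ s, 0 ≤ s → 0 ≤ τ i s) ∧ (∀ s u, 0 ≤ s → s ≤ u → τ i s ≤ τ i u) ∧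
    (∀ s, 0 ≤ s → ContinuousWithinAt (τ i) (Ici s) s) ∧ (∀ s, 0 ≤ s → τ i s ≤ s)

/-- A delay is phased if there is an unbounded partition of `[0,∞)` such that on each
partition interval at most one of its components is non-constant. -/
def IsPhasedDelay {m : ℕ} (τ : Fin m → ℝ → ℝ) : Prop :=
  ∃ u : ℕ → ℝ, u 0 = 0 ∧ StrictMono u ∧ Tendsto u atTop atTop ∧
    ∀ l, ∃ i₀ : Fin m, ∀ j ≠ i₀,
      ∀ x ∈ Ioc (u l) (u (l + 1)), ∀ y ∈ Ioc (u l) (u (l + 1)), τ j x = τ j y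

/-- A refining sequence of delays that increases to identity. -/
def IsRefiningToIdentity {m : ℕ} (τ : ℕ → Fin m → ℝ → ℝ) : Prop :=
  ∀ (i : Fin m) (t : ℝ), 0 ≤ t →
    (∀ n, τ n i '' Icc 0 t ⊆ τ (n + 1) i '' Icc 0 t) ∧
    closure (⋃ n, τ n i '' Icc 0 t) = Icc 0 t

/-- The delayed process tuple `X ⋄ τ = (X_1 ∘ τ_1, …, X_m ∘ τ_m)`. -/
def delayed {Ω : Type*} {m : ℕ} (X : Fin m → Ω → ℝ → ℝ) (τ : Fin m → ℝ → ℝ) :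
    Fin m → Ω → ℝ → ℝ :=
  fun i ω u => X i ω (τ i u)

/-- The componentwise stopped tuple of processes `Y^{(t_1,…,t_m)}`. -/
noncomputable def stopProc {Ω : Type*} {m : ℕ} (Y : Fin m → Ω → ℝ → ℝ) (tv : Fin m → ℝ) :
    Fin m → Ω → ℝ → ℝ :=
  fun i ω u => if u ≤ tv i then Y i ω u else Y i ω (tv i)

/-- A decomposition scheme `δ` on a family `𝒳` of process tuples is good if, for every
`Y ∈ 𝒳`, the decomposition `δ Y` starts at `0`, has càdlàg paths, is additive and is
normalized. -/
def IsGoodScheme {Ω : Type*} [MeasurableSpace Ω] (μ : Measure Ω) {m : ℕ}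
    (ρ : (Fin m → Ω → ℝ → ℝ) → Ω → ℝ) (𝒳 : Set (Fin m → Ω → ℝ → ℝ))
    (δ : (Fin m → Ω → ℝ → ℝ) → Fin m → ℝ → Ω → ℝ) : Prop :=
  ∀ Y ∈ 𝒳,
    (∀ (i : Fin m) ω, δ Y i 0 ω = 0) ∧
    (∀ (i : Fin m) ω, CadlagOn (fun t => δ Y i t ω)) ∧
    (∀ t, 0 ≤ t → ∀ᵐ ω ∂μ,
      ρ (stopProc Y fun _ => t) ω - ρ (stopProc Y fun _ => 0) ω =
        ∑ i : Fin m, δ Y i t ω) ∧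
    (∀ (i : Fin m) (a b : ℝ), 0 ≤ a → a < b →
      (∀ ω, ∀ x ∈ Ioc a b, ∀ y ∈ Ioc a b, Y i ω x = Y i ω y) →
      ∀ᵐ ω ∂μ, ∀ x ∈ Ioc a b, ∀ y ∈ Ioc a b, δ Y i x ω = δ Y i y ω)

/-- A decomposition scheme `δ` is stable at `X` along the delay sequence `τ`: the left
limits of `δ (X ⋄ τ n)` converge in probability to the left limits of `δ X`. -/
def StableAt {Ω : Type*} [MeasurableSpace Ω] (μ : Measure Ω) {m : ℕ}
    (X : Fin m → Ω → ℝ → ℝ) (τ : ℕ → Fin m → ℝ → ℝ)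
    (δ : (Fin m → Ω → ℝ → ℝ) → Fin m → ℝ → Ω → ℝ) : Prop :=
  ∀ (i : Fin m) (t : ℝ), 0 < t →
    TendstoInMeasure μ
      (fun n ω => Function.leftLim (fun s => δ (delayed X (τ n)) i s ω) t) atTop
      (fun ω => Function.leftLim (fun s => δ X i s ω) t)


/-- The sequentially-updated time vector for update order `σ`: on the step from `s_l` to
`s_{l+1}`, when component `i` is being updated, coordinate `j` equals `s_{l+1} ∧ t` if `j`
comes at or before `i` in the order `σ`, and `s_l ∧ t` otherwise. -/
def suVperm {m : ℕ} (σ : Equiv.Perm (Fin m)) (s : ℕ → ℝ) (l : ℕ) (i : Fin m) (t : ℝ) :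
    Fin m → ℝ :=
  fun j => if σ.symm j ≤ σ.symm i then min (s (l + 1)) t else min (s l) t

/-- As `suVperm`, but component `i` itself is still at `s_l ∧ t`. -/
def suWperm {m : ℕ} (σ : Equiv.Perm (Fin m)) (s : ℕ → ℝ) (l : ℕ) (i : Fin m) (t : ℝ) :
    Fin m → ℝ :=
  fun j => if σ.symm j < σ.symm i then min (s (l + 1)) t else min (s l) t

/-! For a phased delay `τ`, only one component of `X ⋄ τ` moves on each phase `(A, B]`. Once
the mesh is smaller than `t'' - A`, the SU sums at times `t'' ≤ t` in that phase differ by exactly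
the increment of `ρ` obtained by moving that component from `t''` to `t` with all others frozen at
`B`, whatever the partition and the update order. Passing to the limit, the two ISU decompositions
of `X ⋄ τⁿ` have the same increments on every phase, hence coincide almost surely. Stability
transfers this to the left limits of the decompositions of `X`, and by right-continuity a càdlàg
path is the right limit of its left limits, taken along rational times. -/

open Function

section ConvergenceInMeasure

variable {α ι E : Type*} [MeasurableSpace α] {μ : Measure α} {l : Filter ι}

theorem MeasureTheory.TendstoInMeasure.sub [SeminormedAddCommGroup E] {f f' : ι → α → E}
    {g g' : α → E} (hf : TendstoInMeasure μ f l g) (hf' : TendstoInMeasure μ f' l g') :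
    TendstoInMeasure μ (f - f') l (g - g') := by
  rw [tendstoInMeasure_iff_norm] at hf hf' ⊢
  intro ε hε
  have hsub : ∀ i, {x | ε ≤ ‖(f - f') i x - (g - g') x‖} ⊆
      {x | ε / 2 ≤ ‖f i x - g x‖} ∪ {x | ε / 2 ≤ ‖f' i x - g' x‖} := by
    intro i x hx
    by_contra! h
    have : (f - f') i x - (g - g') x = (f i x - g x) - (f' i x - g' x) := by
      simp only [Pi.sub_apply]; abel
    rw [mem_ofPred_eq, this] at hx
    simp only [mem_union, mem_ofPred_eq, not_or, not_le] at h
    linarith [norm_sub_le (f i x - g x) (f' i x - g' x)]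
  refine tendsto_of_tendsto_of_tendsto_of_le_of_le tendsto_const_nhds
    (by simpa using (hf _ (half_pos hε)).add (hf' _ (half_pos hε))) (fun _ => zero_le)
    fun i => (measure_mono (hsub i)).trans (measure_union_le _ _)

theorem MeasureTheory.tendstoInMeasure_of_eventually_ae_eq [PseudoEMetricSpace E]
    {f : ι → α → E} {g : α → E} (h : ∀ᶠ i in l, f i =ᵐ[μ] g) : TendstoInMeasure μ f l g := by
  refine TendstoInMeasure.congr' (f := fun _ => g) (h.mono fun _ hi => hi.symm) .rfl ?_
  intro ε hε
  simpa [not_le.2 hε] using tendsto_const_nhds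

end ConvergenceInMeasure

theorem leftLim_congr {α β : Type*} [LinearOrder α] [TopologicalSpace α] [OrderTopology α]
    [TopologicalSpace β] [T2Space β] {f g : α → β} {a : α} [(𝓝[<] a).NeBot]
    (h : f =ᶠ[𝓝[≤] a] g) : leftLim f a = leftLim g a := by
  have h' : f =ᶠ[𝓝[<] a] g := h.filter_mono (nhdsWithin_mono _ Iio_subset_Iic_self)
  by_cases hf : ∃ y, Tendsto f (𝓝[<] a) (𝓝 y)
  · obtain ⟨y, hy⟩ := hf
    rw [leftLim_eq_of_tendsto hy, leftLim_eq_of_tendsto (hy.congr' h')]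
  · rw [leftLim_eq_of_not_tendsto _ hf,
      leftLim_eq_of_not_tendsto _ (by simpa [tendsto_congr' h'] using hf),
      h.eq_of_nhdsWithin self_mem_Iic]

theorem tendsto_leftLim_nhdsGT {f : ℝ → ℝ} {t b : ℝ} (hf : Tendsto f (𝓝[>] t) (𝓝 b)) :
    Tendsto (leftLim f) (𝓝[>] t) (𝓝 b) := by
  refine (closed_nhds_basis b).tendsto_right_iff.2 fun V ⟨hV, hVc⟩ => ?_
  obtain ⟨u, htu, hu⟩ := (nhdsGT_basis t).eventually_iff.1 (hf hV)
  filter_upwards [Ioo_mem_nhdsGT htu] with c hc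
  refine hVc.mem_of_mapClusterPt (mapClusterPt_leftLim f c) ?_
  filter_upwards [Ioc_mem_nhdsLE hc.1] with y hy using hu ⟨hy.1, hy.2.trans_lt hc.2⟩

theorem eq_of_tendsto_nhdsGT_of_forall_rat {f : ℝ → ℝ} {x b L c : ℝ} (hxb : x < b)
    (hf : Tendsto f (𝓝[>] x) (𝓝 L)) (hq : ∀ q : ℚ, (q : ℝ) ∈ Ioo x b → f q = c) : L = c := by
  set S := Ioo x b ∩ range ((↑) : ℚ → ℝ)
  have hS : (𝓝[S] x).NeBot := by
    have h := closure_mono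
      (Rat.denseRange_cast.open_subset_closure_inter (isOpen_Ioo (a := x) (b := b)))
    rw [closure_closure, closure_Ioo hxb.ne] at h
    exact mem_closure_iff_nhdsWithin_neBot.1 (h (left_mem_Icc.2 hxb.le))
  refine tendsto_nhds_unique (l := 𝓝[S] x) (hf.mono_left (nhdsWithin_mono _
    (inter_subset_left.trans Ioo_subset_Ioi_self))) (tendsto_const_nhds.congr' ?_)
  refine eventually_nhdsWithin_of_forall ?_
  rintro _ ⟨hy, q, rfl⟩
  exact (hq q hy).symm

theorem eq_of_forall_rat_Ioc {g : ℝ → ℝ} {a b : ℝ}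
    (hg : ∀ x ∈ Ico a b, ContinuousWithinAt g (Ici x) x)
    (hq : ∀ q : ℚ, (q : ℝ) ∈ Ioc a b → g q = g b) : ∀ x ∈ Icc a b, g x = g b := by
  intro x hx
  rcases hx.2.eq_or_lt with rfl | hxb
  · rfl
  exact eq_of_tendsto_nhdsGT_of_forall_rat hxb
    ((hg x ⟨hx.1, hxb⟩).mono_left (nhdsWithin_mono _ Ioi_subset_Ici_self))
    fun q hq' => hq q ⟨hx.1.trans_lt hq'.1, hq'.2.le⟩

theorem eq_zero_of_forall_rat_Ioc {g : ℝ → ℝ} {u : ℕ → ℝ} (hu0 : u 0 = 0) (hu : Monotone u)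
    (hg0 : g 0 = 0) (hg : ∀ x, 0 ≤ x → ContinuousWithinAt g (Ici x) x)
    (hq : ∀ K (q : ℚ), (q : ℝ) ∈ Ioc (u K) (u (K + 1)) → g q = g (u (K + 1))) :
    ∀ K, ∀ x ∈ Icc 0 (u K), g x = 0 := by
  have hu_nonneg K : 0 ≤ u K := hu0 ▸ hu K.zero_le
  intro K
  induction K with
  | zero => rintro x ⟨h0, hx⟩; rw [le_antisymm (hu0 ▸ hx) h0, hg0]
  | succ K ih =>
    rintro x ⟨h0, hx⟩
    rcases le_or_gt x (u K) with hxK | hxK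
    · exact ih x ⟨h0, hxK⟩
    have hconst := eq_of_forall_rat_Ioc (fun y hy => hg y ((hu_nonneg K).trans hy.1)) (hq K)
    rw [hconst x ⟨hxK.le, hx⟩, ← hconst (u K) ⟨le_rfl, hxK.le.trans hx⟩]
    exact ih (u K) ⟨hu_nonneg K, le_rfl⟩

theorem eq_of_leftLim_eq_of_forall_rat {f g : ℝ → ℝ} {t : ℝ}
    (hf : ContinuousWithinAt f (Ici t) t) (hg : ContinuousWithinAt g (Ici t) t)
    (h : ∀ q : ℚ, t < q → leftLim f q = leftLim g q) : f t = g t := by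
  have hlim :=
    (tendsto_leftLim_nhdsGT (hf.mono_left (nhdsWithin_mono _ Ioi_subset_Ici_self))).sub
      (tendsto_leftLim_nhdsGT (hg.mono_left (nhdsWithin_mono _ Ioi_subset_Ici_self)))
  exact sub_eq_zero.1 (eq_of_tendsto_nhdsGT_of_forall_rat (lt_add_one t) hlim
    fun q hq => sub_eq_zero.2 (h q hq.1))

section Phases

variable {Ω : Type*} {m : ℕ}

theorem stop_eq_stop_of_forall_Ioc {f : ℝ → ℝ} {A B x y : ℝ} (hf : ∀ z ∈ Ioc A B, f z = f B)
    (hx : x ∈ Ioc A B) (hy : y ∈ Ioc A B) :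
    (fun u => if u ≤ x then f u else f x) = fun u => if u ≤ y then f u else f y := by
  wlog hxy : x ≤ y generalizing x y
  · exact (this hy hx (le_of_not_ge hxy)).symm
  funext u
  split_ifs with hux huy huy
  · rfl
  · exact absurd (hux.trans hxy) huy
  · rw [hf x hx, hf u ⟨hx.1.trans (not_le.1 hux), huy.trans hy.2⟩]
  · rw [hf x hx, hf y hy]

theorem stopProc_eq_stopProc {Y : Fin m → Ω → ℝ → ℝ} {tv tv' : Fin m → ℝ} {A B : ℝ}
    (h : ∀ j, tv j = tv' j ∨
      tv j ∈ Ioc A B ∧ tv' j ∈ Ioc A B ∧ ∀ ω, ∀ z ∈ Ioc A B, Y j ω z = Y j ω B) :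
    stopProc Y tv = stopProc Y tv' := by
  unfold stopProc
  funext j ω
  rcases h j with h | ⟨hx, hy, hY⟩
  · rw [h]
  · exact stop_eq_stop_of_forall_Ioc (hY ω) hx hy

/-- `(A, B]` is a phase of `Y` in which only the component `c` moves. -/
def IsPhase (Y : Fin m → Ω → ℝ → ℝ) (c : Fin m) (A B : ℝ) : Prop :=
  ∀ j ≠ c, ∀ ω, ∀ z ∈ Ioc A B, Y j ω z = Y j ω B

namespace IsPhase

variable {Y : Fin m → Ω → ℝ → ℝ} {c i : Fin m} {A B : ℝ} {tv tv' : Fin m → ℝ}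

theorem stopProc_eq_update (hY : IsPhase Y c A B) (hAB : A < B)
    (htv : ∀ j ≠ c, tv j ∈ Ioc A B) :
    stopProc Y tv = stopProc Y (update (fun _ => B) c (tv c)) := by
  refine stopProc_eq_stopProc (A := A) (B := B) fun j => ?_
  by_cases hj : j = c
  · subst hj
    simp
  · rw [update_of_ne hj]
    exact .inr ⟨htv j hj, right_mem_Ioc.2 hAB, hY j hj⟩

theorem stopProc_eq_of_ne (hY : IsPhase Y c A B) (hi : i ≠ c) (hx : tv i ∈ Ioc A B)
    (hy : tv' i ∈ Ioc A B) (h : ∀ j ≠ i, tv j = tv' j) : stopProc Y tv = stopProc Y tv' := by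
  refine stopProc_eq_stopProc (A := A) (B := B) fun j => ?_
  by_cases hj : j = i
  · subst hj
    exact .inr ⟨hx, hy, hY j hi⟩
  · exact .inl (h j hj)

end IsPhase

end Phases

section SequentialUpdate

variable {Ω : Type*} {m : ℕ} (ρ : (Fin m → Ω → ℝ → ℝ) → Ω → ℝ) (Y : Fin m → Ω → ℝ → ℝ)
  (σ : Equiv.Perm (Fin m)) {s : ℕ → ℝ} {l : ℕ} {i c : Fin m} {A B t t'' : ℝ}

theorem suVperm_eq_suWperm_of_le (hs : Monotone s) (h : t ≤ s l) :
    suVperm σ s l i t = suWperm σ s l i t := by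
  funext j
  simp only [suVperm, suWperm, min_eq_right h, min_eq_right (h.trans (hs l.le_succ)), ite_self]

theorem suVperm_apply_eq_suWperm_of_ne {j : Fin m} (h : j ≠ i) :
    suVperm σ s l i t j = suWperm σ s l i t j := by
  simp only [suVperm, suWperm, (σ.symm.injective.ne h).le_iff_lt]

theorem suVperm_suWperm_mem_Ioc (hs : Monotone s) (hA : A < s l) (hAt : A < t) (htB : t ≤ B)
    (j : Fin m) : suVperm σ s l i t j ∈ Ioc A B ∧ suWperm σ s l i t j ∈ Ioc A B := by
  have h k (hk : l ≤ k) : min (s k) t ∈ Ioc A B :=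
    ⟨lt_min (hA.trans_le (hs hk)) hAt, (min_le_right _ _).trans htB⟩
  unfold suVperm suWperm
  constructor <;> split_ifs <;> exact h _ (by omega)

/-- The increment of `ρ` attributed to `X_i` on the step from `s l` to `s (l + 1)`. -/
noncomputable def suTerm (s : ℕ → ℝ) (l : ℕ) (i : Fin m) (t : ℝ) (ω : Ω) : ℝ :=
  ρ (stopProc Y (suVperm σ s l i t)) ω - ρ (stopProc Y (suWperm σ s l i t)) ω

noncomputable def suSum (s : ℕ → ℝ) (i : Fin m) (t : ℝ) (ω : Ω) : ℝ :=
  ∑ᶠ l, suTerm ρ Y σ s l i t ω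

/-- The value of `ρ` when component `c` is stopped at `x` and all others at `B`. -/
noncomputable def frozenValue (c : Fin m) (B x : ℝ) (ω : Ω) : ℝ :=
  ρ (stopProc Y (update (fun _ => B) c x)) ω

variable {ρ Y σ}

theorem suTerm_eq_zero_of_le (hs : Monotone s) (h : t ≤ s l) (ω : Ω) :
    suTerm ρ Y σ s l i t ω = 0 := by
  rw [suTerm, suVperm_eq_suWperm_of_le σ hs h, sub_self]

theorem suTerm_eq_suTerm_of_le (hs : Monotone s) (ht : t'' ≤ t) (h : s (l + 1) ≤ t'')
    (ω : Ω) : suTerm ρ Y σ s l i t ω = suTerm ρ Y σ s l i t'' ω := by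
  have hl : s l ≤ t'' := (hs l.le_succ).trans h
  have hV : suVperm σ s l i t = suVperm σ s l i t'' := by
    funext j
    simp only [suVperm, min_eq_left (h.trans ht), min_eq_left h, min_eq_left (hl.trans ht),
      min_eq_left hl]
  have hW : suWperm σ s l i t = suWperm σ s l i t'' := by
    funext j
    simp only [suWperm, min_eq_left (h.trans ht), min_eq_left h, min_eq_left (hl.trans ht),
      min_eq_left hl]
  rw [suTerm, suTerm, hV, hW]

theorem suSum_eq_sum_range (hs : Monotone s) {M : ℕ} (hM : t ≤ s M) (ω : Ω) :
    suSum ρ Y σ s i t ω = ∑ l ∈ Finset.range M, suTerm ρ Y σ s l i t ω := by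
  refine finsum_eq_sum_of_support_subset _ fun l hl => ?_
  by_contra h
  exact hl (suTerm_eq_zero_of_le hs (hM.trans (hs (by simpa using h))) ω)

namespace IsPhase

theorem suTerm_eq_zero_of_ne (hY : IsPhase Y c A B) (hi : i ≠ c) (hs : Monotone s)
    (hA : A < s l) (hAt : A < t) (htB : t ≤ B) (ω : Ω) : suTerm ρ Y σ s l i t ω = 0 := by
  have hmem := suVperm_suWperm_mem_Ioc σ (i := i) hs hA hAt htB
  rw [suTerm, hY.stopProc_eq_of_ne hi (hmem i).1 (hmem i).2
    fun j hj => suVperm_apply_eq_suWperm_of_ne σ hj, sub_self]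

theorem suTerm_eq_suTerm_of_ne (hY : IsPhase Y c A B) (hi : i ≠ c) (hs : Monotone s)
    (hA : A < t'') (ht : t'' ≤ t) (htB : t ≤ B) (hmesh : s (l + 1) - s l < t'' - A) (ω : Ω) :
    suTerm ρ Y σ s l i t ω = suTerm ρ Y σ s l i t'' ω := by
  rcases le_or_gt (s (l + 1)) t'' with hl | hl
  · exact suTerm_eq_suTerm_of_le hs ht hl ω
  rcases le_or_gt t (s l) with ht' | ht'
  · rw [suTerm_eq_zero_of_le hs ht', suTerm_eq_zero_of_le hs (ht.trans ht')]
  -- the mesh bound puts the whole step inside the phase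
  have hAl : A < s l := by linarith
  rw [hY.suTerm_eq_zero_of_ne hi hs hAl (hA.trans_le ht) htB,
    hY.suTerm_eq_zero_of_ne hi hs hAl hA (ht.trans htB)]

theorem suTerm_sub_suTerm_self (hY : IsPhase Y c A B) (hs : Monotone s) (hA : A < t'')
    (ht : t'' ≤ t) (htB : t ≤ B) (hmesh : s (l + 1) - s l < t'' - A) (ω : Ω) :
    suTerm ρ Y σ s l c t ω - suTerm ρ Y σ s l c t'' ω =
      frozenValue ρ Y c B (max (min (s (l + 1)) t) t'') ω -
        frozenValue ρ Y c B (max (min (s l) t) t'') ω := by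
  rcases le_or_gt (s (l + 1)) t'' with hl | hl
  · have hl' : s l ≤ t'' := (hs l.le_succ).trans hl
    rw [suTerm_eq_suTerm_of_le hs ht hl, max_eq_right ((min_le_left _ _).trans hl),
      max_eq_right ((min_le_left _ _).trans hl'), sub_self, sub_self]
  rcases le_or_gt t (s l) with ht' | ht'
  · rw [suTerm_eq_zero_of_le hs ht', suTerm_eq_zero_of_le hs (ht.trans ht'),
      min_eq_right ht', min_eq_right (ht'.trans (hs l.le_succ)), sub_self, sub_self]
  have hAl : A < s l := by linarith
  have hAB : A < B := hA.trans_le (ht.trans htB)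
  have hfreeze (r : ℝ) (hAr : A < r) (hrB : r ≤ B) :
      stopProc Y (suVperm σ s l c r) =
        stopProc Y (update (fun _ => B) c (min (s (l + 1)) r)) ∧
      stopProc Y (suWperm σ s l c r) = stopProc Y (update (fun _ => B) c (min (s l) r)) := by
    have hmem := suVperm_suWperm_mem_Ioc σ (i := c) hs hAl hAr hrB
    refine ⟨?_, ?_⟩
    · simpa [suVperm] using hY.stopProc_eq_update hAB fun j _ => (hmem j).1
    · simpa [suWperm] using hY.stopProc_eq_update hAB fun j _ => (hmem j).2
  obtain ⟨hVt, hWt⟩ := hfreeze t (hA.trans_le ht) htB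
  obtain ⟨hVt'', hWt''⟩ := hfreeze t'' hA (ht.trans htB)
  simp only [suTerm, frozenValue, hVt, hWt, hVt'', hWt'',
    min_eq_right hl.le, min_eq_left ht'.le, max_eq_left (le_min hl.le ht)]
  rcases le_total (s l) t'' with h | h
  · rw [min_eq_left h, max_eq_right h]; ring
  · rw [min_eq_right h, max_eq_left h]; ring

theorem suSum_sub_suSum (hY : IsPhase Y c A B) (hs : Monotone s) (hs0 : s 0 ≤ t'')
    (hstop : Tendsto s atTop atTop) (hmesh : ∀ k, s (k + 1) - s k < t'' - A) (hA : A < t'')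
    (ht : t'' ≤ t) (htB : t ≤ B) (i : Fin m) (ω : Ω) :
    suSum ρ Y σ s i t ω - suSum ρ Y σ s i t'' ω =
      if i = c then frozenValue ρ Y c B t ω - frozenValue ρ Y c B t'' ω else 0 := by
  obtain ⟨M, hM⟩ := (hstop.eventually_ge_atTop t).exists
  rw [suSum_eq_sum_range hs hM, suSum_eq_sum_range hs (ht.trans hM), ← Finset.sum_sub_distrib]
  split_ifs with hi
  · subst hi
    rw [Finset.sum_congr rfl fun l _ => hY.suTerm_sub_suTerm_self hs hA ht htB (hmesh l) ω,
      Finset.sum_range_sub (fun l => frozenValue ρ Y i B (max (min (s l) t) t'') ω),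
      min_eq_right hM, max_eq_left ht, max_eq_right ((min_le_left _ _).trans hs0)]
  · exact Finset.sum_eq_zero fun l _ =>
      sub_eq_zero.2 (hY.suTerm_eq_suTerm_of_ne hi hs hA ht htB (hmesh l) ω)

end IsPhase

end SequentialUpdate

structure IsFinePartitionSeq (s : ℕ → ℕ → ℝ) : Prop where
  zero : ∀ n, s n 0 = 0
  mono : ∀ n, Monotone (s n)
  tendsto_atTop : ∀ n, Tendsto (s n) atTop atTop
  mesh : ∀ ε > (0 : ℝ), ∃ N, ∀ n ≥ N, ∀ k, s n (k + 1) - s n k < ε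

def IsISU {Ω : Type*} [MeasurableSpace Ω] (μ : Measure Ω) {m : ℕ}
    (ρ : (Fin m → Ω → ℝ → ℝ) → Ω → ℝ) (σ : Equiv.Perm (Fin m)) (s : ℕ → ℕ → ℝ)
    (Y : Fin m → Ω → ℝ → ℝ) (δ : Fin m → ℝ → Ω → ℝ) : Prop :=
  ∀ i t, 0 ≤ t → TendstoInMeasure μ (fun n => suSum ρ Y σ (s n) i t) atTop (δ i t)

namespace IsISU

variable {Ω : Type*} [MeasurableSpace Ω] {μ : Measure Ω} {m : ℕ}
  {ρ : (Fin m → Ω → ℝ → ℝ) → Ω → ℝ} {σ σ' : Equiv.Perm (Fin m)} {s s' : ℕ → ℕ → ℝ}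
  {Y : Fin m → Ω → ℝ → ℝ} {δ δ' : Fin m → ℝ → Ω → ℝ}

theorem sub_ae_eq (hδ : IsISU μ ρ σ s Y δ) (hs : IsFinePartitionSeq s) {c : Fin m}
    {A B t t'' : ℝ} (hY : IsPhase Y c A B) (hA : 0 ≤ A) (h1 : A < t'') (ht : t'' ≤ t)
    (htB : t ≤ B) (i : Fin m) :
    δ i t - δ i t'' =ᵐ[μ] fun ω =>
      if i = c then frozenValue ρ Y c B t ω - frozenValue ρ Y c B t'' ω else 0 := by
  refine tendstoInMeasure_ae_unique ((hδ i t (by linarith)).sub (hδ i t'' (by linarith)))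
    (tendstoInMeasure_of_eventually_ae_eq ?_)
  obtain ⟨N, hN⟩ := hs.mesh (t'' - A) (by linarith)
  filter_upwards [eventually_ge_atTop N] with n hn
  exact .of_forall fun ω => hY.suSum_sub_suSum (hs.mono n)
    ((hs.zero n).trans_le (hA.trans h1.le)) (hs.tendsto_atTop n) (hN n hn) h1 ht htB i ω

/-- On each phase, the increments of an ISU decomposition do not depend on the partitions or
the update order; right-continuity then propagates the agreement from rational times. -/
theorem ae_eq_of_phases (hδ : IsISU μ ρ σ s Y δ) (hδ' : IsISU μ ρ σ' s' Y δ')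
    (hs : IsFinePartitionSeq s) (hs' : IsFinePartitionSeq s') {u : ℕ → ℝ} {c : ℕ → Fin m}
    (hu0 : u 0 = 0) (hu : Monotone u) (hutop : Tendsto u atTop atTop)
    (hY : ∀ K, IsPhase Y (c K) (u K) (u (K + 1))) (h0 : ∀ i ω, δ i 0 ω = δ' i 0 ω)
    (hrc : ∀ i ω x, 0 ≤ x → ContinuousWithinAt (δ i · ω) (Ici x) x)
    (hrc' : ∀ i ω x, 0 ≤ x → ContinuousWithinAt (δ' i · ω) (Ici x) x) :
    ∀ᵐ ω ∂μ, ∀ i t, 0 ≤ t → δ i t ω = δ' i t ω := by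
  have hu_nonneg K : 0 ≤ u K := hu0 ▸ hu K.zero_le
  have hinc i K (q : ℚ) : ∀ᵐ ω ∂μ, (q : ℝ) ∈ Ioc (u K) (u (K + 1)) →
      δ i q ω - δ' i q ω = δ i (u (K + 1)) ω - δ' i (u (K + 1)) ω := by
    refine eventually_imp_distrib_left.2 fun hq => ?_
    filter_upwards [hδ.sub_ae_eq hs (hY K) (hu_nonneg K) hq.1 hq.2 le_rfl i,
      hδ'.sub_ae_eq hs' (hY K) (hu_nonneg K) hq.1 hq.2 le_rfl i] with ω h h'
    simp only [Pi.sub_apply] at h h'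
    linarith
  filter_upwards [ae_all_iff.2 fun i => ae_all_iff.2 fun K => ae_all_iff.2 (hinc i K)]
    with ω hω i t ht
  obtain ⟨K, hK⟩ := (hutop.eventually_ge_atTop t).exists
  exact sub_eq_zero.1 (eq_zero_of_forall_rat_Ioc (g := fun x => δ i x ω - δ' i x ω) hu0 hu
    (sub_eq_zero.2 (h0 i ω)) (fun x hx => (hrc i ω x hx).sub (hrc' i ω x hx)) (hω i)
    K t ⟨ht, hK⟩)

end IsISU

theorem IsPhasedDelay.exists_phases {Ω : Type*} {m : ℕ} {τ : Fin m → ℝ → ℝ}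
    (hτ : IsPhasedDelay τ) (X : Fin m → Ω → ℝ → ℝ) :
    ∃ u : ℕ → ℝ, u 0 = 0 ∧ Monotone u ∧ Tendsto u atTop atTop ∧
      ∃ c : ℕ → Fin m, ∀ K, IsPhase (delayed X τ) (c K) (u K) (u (K + 1)) := by
  obtain ⟨u, hu0, hu, hutop, hc⟩ := hτ
  choose c hc using hc
  exact ⟨u, hu0, hu.monotone, hutop, c, fun K j hj ω z hz =>
    congrArg (X j ω) (hc K j hj z hz _ (right_mem_Ioc.2 (hu K.lt_succ_self)))⟩

theorem StableAt.ae_leftLim_eq {Ω : Type*} [MeasurableSpace Ω] {μ : Measure Ω} {m : ℕ}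
    {X : Fin m → Ω → ℝ → ℝ} {τ : ℕ → Fin m → ℝ → ℝ}
    {δ δ' : (Fin m → Ω → ℝ → ℝ) → Fin m → ℝ → Ω → ℝ}
    (hδ : StableAt μ X τ δ) (hδ' : StableAt μ X τ δ')
    (hagree : ∀ n, ∀ᵐ ω ∂μ, ∀ i t, 0 ≤ t →
      δ (delayed X (τ n)) i t ω = δ' (delayed X (τ n)) i t ω) :
    ∀ᵐ ω ∂μ, ∀ i (q : ℚ), 0 < (q : ℝ) →
      leftLim (δ X i · ω) q = leftLim (δ' X i · ω) q := by
  refine ae_all_iff.2 fun i => ae_all_iff.2 fun q => eventually_imp_distrib_left.2 fun hq => ?_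
  refine tendstoInMeasure_ae_unique (hδ i q hq) ((hδ' i q hq).congr_left fun n => ?_)
  filter_upwards [hagree n] with ω hω
  refine (leftLim_congr ?_).symm
  filter_upwards [Ioc_mem_nhdsLE hq] with x hx using hω i x hx.1.le

theorem isu_invariance_partition_and_update_order_general
    {Ω : Type*} [MeasurableSpace Ω] (μ : Measure Ω)
    {m : ℕ}
    (X : Fin m → Ω → ℝ → ℝ)
    (ρ : (Fin m → Ω → ℝ → ℝ) → Ω → ℝ)
    (𝒯 : Set (Fin m → ℝ → ℝ))
    (τ : ℕ → Fin m → ℝ → ℝ) (hτmem : ∀ n, τ n ∈ 𝒯)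
    (hτphased : ∀ n, IsPhasedDelay (τ n))
    -- the two partition sequences Π and Π̃
    (s s' : ℕ → ℕ → ℝ)
    (hs0 : ∀ n, s n 0 = 0) (hsmono : ∀ n, StrictMono (s n))
    (hsunbdd : ∀ n, Tendsto (s n) atTop atTop)
    (hmesh : ∀ ε > (0 : ℝ), ∃ N, ∀ n ≥ N, ∀ k, s n (k + 1) - s n k < ε)
    (hs'0 : ∀ n, s' n 0 = 0) (hs'mono : ∀ n, StrictMono (s' n))
    (hs'unbdd : ∀ n, Tendsto (s' n) atTop atTop)
    (hmesh' : ∀ ε > (0 : ℝ), ∃ N, ∀ n ≥ N, ∀ k, s' n (k + 1) - s' n k < ε)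
    -- the update order of the second scheme
    (σ : Equiv.Perm (Fin m))
    -- the ISU decomposition scheme with respect to Π in the natural update order …
    (δISU : (Fin m → Ω → ℝ → ℝ) → Fin m → ℝ → Ω → ℝ)
    (hISU0 : ∀ Y ∈ insert X {Y | ∃ τ' ∈ 𝒯, Y = delayed X τ'},
      ∀ (i : Fin m) ω, δISU Y i 0 ω = 0)
    (hISUcadlag : ∀ Y ∈ insert X {Y | ∃ τ' ∈ 𝒯, Y = delayed X τ'},
      ∀ (i : Fin m) ω, CadlagOn (fun t => δISU Y i t ω))
    (hISUlim : ∀ Y ∈ insert X {Y | ∃ τ' ∈ 𝒯, Y = delayed X τ'},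
      ∀ (i : Fin m) (t : ℝ), 0 ≤ t →
        TendstoInMeasure μ
          (fun n ω => ∑ᶠ l : ℕ,
            (ρ (stopProc Y (suVperm (Equiv.refl (Fin m)) (s n) l i t)) ω -
              ρ (stopProc Y (suWperm (Equiv.refl (Fin m)) (s n) l i t)) ω))
          atTop (δISU Y i t))
    (hISUstab : StableAt μ X τ δISU)
    -- … and the ISU decomposition scheme with respect to Π̃ in the update order σ
    (δISU' : (Fin m → Ω → ℝ → ℝ) → Fin m → ℝ → Ω → ℝ)
    (hISU'0 : ∀ Y ∈ insert X {Y | ∃ τ' ∈ 𝒯, Y = delayed X τ'},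
      ∀ (i : Fin m) ω, δISU' Y i 0 ω = 0)
    (hISU'cadlag : ∀ Y ∈ insert X {Y | ∃ τ' ∈ 𝒯, Y = delayed X τ'},
      ∀ (i : Fin m) ω, CadlagOn (fun t => δISU' Y i t ω))
    (hISU'lim : ∀ Y ∈ insert X {Y | ∃ τ' ∈ 𝒯, Y = delayed X τ'},
      ∀ (i : Fin m) (t : ℝ), 0 ≤ t →
        TendstoInMeasure μ
          (fun n ω => ∑ᶠ l : ℕ,
            (ρ (stopProc Y (suVperm σ (s' n) l i t)) ω -
              ρ (stopProc Y (suWperm σ (s' n) l i t)) ω))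
          atTop (δISU' Y i t))
    (hISU'stab : StableAt μ X τ δISU') :
    ∀ᵐ ω ∂μ, ∀ (i : Fin m) (t : ℝ), 0 ≤ t → δISU X i t ω = δISU' X i t ω := by
  have hXmem : X ∈ insert X {Y | ∃ τ' ∈ 𝒯, Y = delayed X τ'} := mem_insert _ _
  have hYmem n : delayed X (τ n) ∈ insert X {Y | ∃ τ' ∈ 𝒯, Y = delayed X τ'} :=
    .inr ⟨τ n, hτmem n, rfl⟩
  have hs : IsFinePartitionSeq s := ⟨hs0, fun n => (hsmono n).monotone, hsunbdd, hmesh⟩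
  have hs' : IsFinePartitionSeq s' := ⟨hs'0, fun n => (hs'mono n).monotone, hs'unbdd, hmesh'⟩
  have hagree n : ∀ᵐ ω ∂μ, ∀ i t, 0 ≤ t →
      δISU (delayed X (τ n)) i t ω = δISU' (delayed X (τ n)) i t ω := by
    obtain ⟨u, hu0, hu, hutop, c, hY⟩ := (hτphased n).exists_phases X
    exact IsISU.ae_eq_of_phases (hISUlim _ (hYmem n)) (hISU'lim _ (hYmem n)) hs hs' hu0 hu hutop
      hY (fun i ω => by rw [hISU0 _ (hYmem n), hISU'0 _ (hYmem n)])
      (fun i ω => (hISUcadlag _ (hYmem n) i ω).1) (fun i ω => (hISU'cadlag _ (hYmem n) i ω).1)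
  filter_upwards [hISUstab.ae_leftLim_eq hISU'stab hagree] with ω hω i t ht
  exact eq_of_leftLim_eq_of_forall_rat ((hISUcadlag X hXmem i ω).1 t ht)
    ((hISU'cadlag X hXmem i ω).1 t ht) fun q hq => hω i q (ht.trans_lt hq)

/-- Proposition 4.3, Invariance. Two ISU decomposition schemes, built
from possibly different increasing sequences of unbounded partitions with vanishing mesh
and possibly different update orders, coincide at `X` almost surely, provided both exist
and are stable at `X` along a refining sequence of phased delays increasing to identity. -/
theorem isu_invariance_partition_and_update_order
    {Ω : Type*} [MeasurableSpace Ω] (μ : Measure Ω) [IsProbabilityMeasure μ]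
    {m : ℕ} (hm : 1 ≤ m)
    (X : Fin m → Ω → ℝ → ℝ) (hX : ∀ i ω, CadlagOn (X i ω))
    (ρ : (Fin m → Ω → ℝ → ℝ) → Ω → ℝ)
    (𝒯 : Set (Fin m → ℝ → ℝ)) (h𝒯 : ∀ τ' ∈ 𝒯, IsDelay τ')
    (τ : ℕ → Fin m → ℝ → ℝ) (hτmem : ∀ n, τ n ∈ 𝒯)
    (hτdelay : ∀ n, IsDelay (τ n))
    (hτphased : ∀ n, IsPhasedDelay (τ n))
    (hτref : IsRefiningToIdentity τ)
    -- the two partition sequences Π and Π̃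
    (s s' : ℕ → ℕ → ℝ)
    (hs0 : ∀ n, s n 0 = 0) (hsmono : ∀ n, StrictMono (s n))
    (hsunbdd : ∀ n, Tendsto (s n) atTop atTop)
    (hincr : ∀ n, Set.range (s n) ⊆ Set.range (s (n + 1)))
    (hmesh : ∀ ε > (0 : ℝ), ∃ N, ∀ n ≥ N, ∀ k, s n (k + 1) - s n k < ε)
    (hs'0 : ∀ n, s' n 0 = 0) (hs'mono : ∀ n, StrictMono (s' n))
    (hs'unbdd : ∀ n, Tendsto (s' n) atTop atTop)
    (hincr' : ∀ n, Set.range (s' n) ⊆ Set.range (s' (n + 1)))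
    (hmesh' : ∀ ε > (0 : ℝ), ∃ N, ∀ n ≥ N, ∀ k, s' n (k + 1) - s' n k < ε)
    -- the update order of the second scheme
    (σ : Equiv.Perm (Fin m))
    -- the ISU decomposition scheme with respect to Π in the natural update order …
    (δISU : (Fin m → Ω → ℝ → ℝ) → Fin m → ℝ → Ω → ℝ)
    (hISU0 : ∀ Y ∈ insert X {Y | ∃ τ' ∈ 𝒯, Y = delayed X τ'},
      ∀ (i : Fin m) ω, δISU Y i 0 ω = 0)
    (hISUcadlag : ∀ Y ∈ insert X {Y | ∃ τ' ∈ 𝒯, Y = delayed X τ'},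
      ∀ (i : Fin m) ω, CadlagOn (fun t => δISU Y i t ω))
    (hISUlim : ∀ Y ∈ insert X {Y | ∃ τ' ∈ 𝒯, Y = delayed X τ'},
      ∀ (i : Fin m) (t : ℝ), 0 ≤ t →
        TendstoInMeasure μ
          (fun n ω => ∑ᶠ l : ℕ,
            (ρ (stopProc Y (suVperm (Equiv.refl (Fin m)) (s n) l i t)) ω -
              ρ (stopProc Y (suWperm (Equiv.refl (Fin m)) (s n) l i t)) ω))
          atTop (δISU Y i t))
    (hISUstab : StableAt μ X τ δISU)
    -- … and the ISU decomposition scheme with respect to Π̃ in the update order σ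
    (δISU' : (Fin m → Ω → ℝ → ℝ) → Fin m → ℝ → Ω → ℝ)
    (hISU'0 : ∀ Y ∈ insert X {Y | ∃ τ' ∈ 𝒯, Y = delayed X τ'},
      ∀ (i : Fin m) ω, δISU' Y i 0 ω = 0)
    (hISU'cadlag : ∀ Y ∈ insert X {Y | ∃ τ' ∈ 𝒯, Y = delayed X τ'},
      ∀ (i : Fin m) ω, CadlagOn (fun t => δISU' Y i t ω))
    (hISU'lim : ∀ Y ∈ insert X {Y | ∃ τ' ∈ 𝒯, Y = delayed X τ'},
      ∀ (i : Fin m) (t : ℝ), 0 ≤ t →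
        TendstoInMeasure μ
          (fun n ω => ∑ᶠ l : ℕ,
            (ρ (stopProc Y (suVperm σ (s' n) l i t)) ω -
              ρ (stopProc Y (suWperm σ (s' n) l i t)) ω))
          atTop (δISU' Y i t))
    (hISU'stab : StableAt μ X τ δISU') :
    ∀ᵐ ω ∂μ, ∀ (i : Fin m) (t : ℝ), 0 ≤ t → δISU X i t ω = δISU' X i t ω :=
  isu_invariance_partition_and_update_order_general μ X ρ 𝒯 τ hτmem hτphased s s' hs0 hsmono hsunbdd
    hmesh hs'0 hs'mono hs'unbdd hmesh' σ δISU hISU0 hISUcadlag hISUlim hISUstab δISU' hISU'0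
    hISU'cadlag hISU'lim hISU'stab
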